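/- arXiv:1204.5247 — 6 statements merged into one kernel-verified Lean document; each statement's English description precedes it below -/
import Mathlib

section
/- For every positive integer d, if n and m are positive integers with n ≤ m, then the Macaulay bound is monotone: (n_{(d)})^1_1 ≤ (m_{(d)})^1_1. -/
/-!
Split off the leading term: if `C(k, d+1) ≤ n < C(k+1, d+1)` then
`mb n (d+1) = C(k+1, d+2) + mb (n - C(k, d+1)) d`, and Pascal's rule bounds the remainder by
`C(k, d)`. By induction on `d`, a remainder `r ≤ C(k, d)` contributes at most `C(k+1, d+1)`,
so `mb n (d+1) ≤ C(k+2, d+2)`. Now let `n ≤ m` with leading indices `k ≤ k'`. If `k = k'` the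
leading terms agree and induction applies to the remainders; if `k < k'` then
`mb n (d+1) ≤ C(k+2, d+2) ≤ C(k'+1, d+2) ≤ mb m (d+1)`.
-/

open scoped Classical

/-- Macaulay upper bound `(n_(d))^1_1`, computed via the greedy `d`-binomial expansion:
if `n = C(k_d,d) + C(k_{d-1},d-1) + ... + C(k_δ,δ)` with `k_d > ... > k_δ ≥ δ ≥ 1`,
then `mb n d = C(k_d+1,d+1) + C(k_{d-1}+1,d) + ... + C(k_δ+1,δ+1)`. -/
def mb : ℕ → ℕ → ℕ
  | _, 0 => 0
  | n, d + 1 =>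
    if n = 0 then 0 else
      let k := Nat.findGreatest (fun k => Nat.choose k (d + 1) ≤ n) (n + d + 1)
      Nat.choose (k + 1) (d + 2) + mb (n - Nat.choose k (d + 1)) d

namespace Nat

theorem choose_lt_choose_of_lt {a b j : ℕ} (hja : j ≤ a) (hab : a < b) :
    a.choose (j + 1) < b.choose (j + 1) :=
  calc a.choose (j + 1) < (a + 1).choose (j + 1) := by
        rw [choose_succ_succ']
        exact Nat.lt_add_of_pos_left (choose_pos hja)
    _ ≤ b.choose (j + 1) := choose_le_choose _ hab

theorem lt_choose_add_add_one (n d : ℕ) : n < (n + d + 1).choose (d + 1) := by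
  induction n with
  | zero => simp
  | succ n ih =>
    rw [show n + 1 + d + 1 = n + d + 1 + 1 by omega, choose_succ_succ']
    have := choose_pos (show d ≤ n + d + 1 by omega)
    omega

end Nat

theorem mb_zero_left (d : ℕ) : mb 0 d = 0 := by
  cases d <;> simp [mb]

theorem exists_mb_succ_eq {n : ℕ} (d : ℕ) (hn : n ≠ 0) :
    ∃ k, k.choose (d + 1) ≤ n ∧ n < (k + 1).choose (d + 1) ∧
      mb n (d + 1) = (k + 1).choose (d + 2) + mb (n - k.choose (d + 1)) d := by
  obtain ⟨k, hk⟩ : ∃ k, Nat.findGreatest (fun k => k.choose (d + 1) ≤ n) (n + d + 1) = k :=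
    ⟨_, rfl⟩
  have hkn : k.choose (d + 1) ≤ n :=
    hk ▸ Nat.findGreatest_spec (P := fun k => k.choose (d + 1) ≤ n) (Nat.zero_le _) (by simp)
  refine ⟨k, hkn, ?_, by rw [mb, if_neg hn, hk]⟩
  by_contra! hk1
  have hbound : n + d + 1 ≤ k := by
    by_contra! hlt
    have := hk ▸ Nat.le_findGreatest (show k + 1 ≤ n + d + 1 by omega) hk1
    omega
  have := Nat.choose_le_choose (d + 1) hbound
  have := Nat.lt_choose_add_add_one n d
  omega

theorem mb_le_choose_succ_of_le_choose {d k r : ℕ} (hr : r ≤ k.choose d) :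
    mb r d ≤ (k + 1).choose (d + 1) := by
  induction d generalizing k r with
  | zero => simp [mb]
  | succ d ih =>
    rcases Nat.eq_zero_or_pos r with rfl | hr0
    · simp [mb_zero_left]
    obtain ⟨j, hjr, hrj, hmb⟩ := exists_mb_succ_eq d hr0.ne'
    have hdk : d + 1 ≤ k := by
      by_contra! h
      rw [Nat.choose_eq_zero_of_lt h] at hr
      omega
    have hjk : j ≤ k := by
      by_contra! h
      have : k.choose (d + 1) < j.choose (d + 1) := Nat.choose_lt_choose_of_lt (by omega) h
      omega
    have hpascal := Nat.choose_succ_succ' j d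
    have hrem : mb (r - j.choose (d + 1)) d ≤ (j + 1).choose (d + 1) := ih (by omega)
    rw [hmb]
    rcases hjk.eq_or_lt with rfl | hjk
    · rw [show r - j.choose (d + 1) = 0 by omega, mb_zero_left, add_zero]
    · calc (j + 1).choose (d + 2) + mb (r - j.choose (d + 1)) d
          ≤ (j + 1).choose (d + 2) + (j + 1).choose (d + 1) := by omega
        _ = (j + 2).choose (d + 2) := by rw [Nat.choose_succ_succ' (j + 1) (d + 1)]; ring
        _ ≤ (k + 1).choose (d + 2) := Nat.choose_le_choose _ (by omega)

theorem mb_mono_left (d : ℕ) : Monotone (mb · d) := by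
  induction d with
  | zero => intro n m _; simp [mb]
  | succ d ih =>
    intro n m hnm
    show mb n (d + 1) ≤ mb m (d + 1)
    rcases Nat.eq_zero_or_pos n with rfl | hn0
    · simp [mb_zero_left]
    obtain ⟨k, hkn, hnk, hmbn⟩ := exists_mb_succ_eq d hn0.ne'
    obtain ⟨k', hkm, hmk, hmbm⟩ := exists_mb_succ_eq d (show m ≠ 0 by omega)
    have hkk : k ≤ k' := by
      by_contra! h
      have := Nat.choose_le_choose (d + 1) (show k' + 1 ≤ k by omega)
      omega
    rcases hkk.eq_or_lt with rfl | hkk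
    · rw [hmbn, hmbm]
      exact Nat.add_le_add_left (ih (Nat.sub_le_sub_right hnm _)) _
    · calc mb n (d + 1) ≤ (k + 1 + 1).choose (d + 1 + 1) :=
            mb_le_choose_succ_of_le_choose hnk.le
        _ ≤ (k' + 1).choose (d + 2) := Nat.choose_le_choose _ (by omega)
        _ ≤ mb m (d + 1) := hmbm ▸ Nat.le_add_right _ _

theorem stmt1_general (d : ℕ) (n m : ℕ) (hnm : n ≤ m) :
    mb n d ≤ mb m d :=
  mb_mono_left d hnm

/-- For every positive integer `d`, the Macaulay bound is monotone:
if `0 < n ≤ m` then `(n_(d))^1_1 ≤ (m_(d))^1_1`. -/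
theorem stmt1 (d : ℕ) (hd : 1 ≤ d) (n m : ℕ) (hn : 0 < n) (hnm : n ≤ m) :
    mb n d ≤ mb m d :=
  stmt1_general d n m hnm
end

section
/- Let X be a pure monomial order ideal with h-vector (h_0=1, h_1, ..., h_e). Then h_i ≤ h_j whenever 0 ≤ i ≤ j ≤ e−i. In particular, h is flawless (h_i ≤ h_{e−i} for 0 ≤ i ≤ ⌊e/2⌋) and the first half 1 = h_0 ≤ h_1 ≤ ... ≤ h_{⌊e/2⌋} is nondecreasing. -/
/-!
Every monomial of `X` of degree `i` divides a maximal monomial `P`, of degree `e`. The divisors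
of `P` form a product of chains, which has a symmetric chain decomposition (built one variable at
a time: the product of a symmetric chain with a chain splits into hooks). For `i ≤ j ≤ e - i`,
moving each degree-`i` divisor of `P` up its chain to degree `j` is an injection `g` with
`m ∣ g m`. These local injections are glued by a rank argument: the generic incidence matrix
between the degree-`j` and the degree-`i` monomials of `X` has trivial kernel, because every
column lies in a square submatrix (columns the degree-`i` divisors of some `P`, rows their images
under `g`) that specialises to the identity.
-/

open scoped Classical

/-- total degree of a monomial, recorded as an exponent vector -/
def mdeg {r : ℕ} (m : Fin r → ℕ) : ℕ := ∑ i, m i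

/-- a monomial order ideal: a finite nonempty set of monomials closed under divisibility -/
def IsOrderIdeal {r : ℕ} (X : Finset (Fin r → ℕ)) : Prop :=
  X.Nonempty ∧ ∀ m ∈ X, ∀ m' : Fin r → ℕ, m' ≤ m → m' ∈ X

/-- the maximal monomials of `X` under divisibility -/
noncomputable def maxMons {r : ℕ} (X : Finset (Fin r → ℕ)) : Finset (Fin r → ℕ) :=
  X.filter fun m => ∀ m' ∈ X, m ≤ m' → m' = m

/-- `X` is pure of socle degree `e`: all maximal monomials have degree `e` -/
def IsPure {r : ℕ} (X : Finset (Fin r → ℕ)) (e : ℕ) : Prop :=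
  ∀ m ∈ maxMons X, mdeg m = e

/-- the `h`-vector of `X`: the number of monomials of each degree -/
noncomputable def hVec {r : ℕ} (X : Finset (Fin r → ℕ)) (i : ℕ) : ℕ :=
  (X.filter fun m => mdeg m = i).card

/-- a finite list is a pure `O`-sequence if it is the `h`-vector of a pure monomial
order ideal (of socle degree `length - 1`) -/
def IsPureOSeqList (h : List ℕ) : Prop :=
  ∃ (r : ℕ) (X : Finset (Fin r → ℕ)), IsOrderIdeal X ∧ IsPure X (h.length - 1) ∧
    ∀ i, hVec X i = h.getD i 0

open Finset Matrix

theorem Matrix.card_le_card_of_forall_exists_det_submatrix_ne_zero {R m n : Type*}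
    [CommRing R] [IsDomain R] [Fintype m] [Fintype n] [DecidableEq n] (M : Matrix m n R)
    (h : ∀ j, ∃ (S : Finset n) (ρ : S → m), j ∈ S ∧ (∀ s, ∀ j' ∉ S, M (ρ s) j' = 0) ∧
      (M.submatrix ρ Subtype.val).det ≠ 0) :
    Fintype.card n ≤ Fintype.card m := by
  refine card_le_of_injective R M.mulVecLin fun v w hvw => ?_
  suffices ∀ d, M *ᵥ d = 0 → d = 0 from
    sub_eq_zero.mp (this _ (by rw [mulVec_sub]; exact sub_eq_zero.mpr hvw))
  intro d hd
  funext j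
  obtain ⟨S, ρ, hjS, hzero, hdet⟩ := h j
  have hsub : M.submatrix ρ Subtype.val *ᵥ (fun s : S => d s) = 0 := by
    funext s
    have hrow := congrFun hd (ρ s)
    simp only [mulVec, dotProduct, submatrix_apply, Pi.zero_apply] at hrow ⊢
    rw [← hrow, sum_coe_sort S (fun j' => M (ρ s) j' * d j')]
    exact sum_subset (subset_univ S) fun j' _ hj' => by rw [hzero s j' hj', zero_mul]
  exact congrFun (eq_zero_of_mulVec_eq_zero hdet hsub) ⟨j, hjS⟩

theorem Finset.card_le_card_of_forall_exists_injOn_le {α : Type*} [LE α] {A B : Finset α}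
    (h : ∀ a ∈ A, ∃ S : Finset α, a ∈ S ∧ ∃ g : α → α, Set.InjOn g S ∧
      ∀ s ∈ S, s ≤ g s ∧ g s ∈ B ∧ ∀ a' ∈ A, a' ≤ g s → a' ∈ S) :
    #A ≤ #B := by
  let M : Matrix B A (MvPolynomial (α × α) ℤ) := fun b a =>
    if (a : α) ≤ b then MvPolynomial.X ((a : α), (b : α)) else 0
  simpa using M.card_le_card_of_forall_exists_det_submatrix_ne_zero fun a => by
    obtain ⟨S, haS, g, hg, hgS⟩ := h a a.2
    let ρ : S.subtype (· ∈ A) → B := fun s => ⟨g s, (hgS s (mem_subtype.mp s.2)).2.1⟩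
    have hzero : ∀ s, ∀ a' ∉ S.subtype (· ∈ A), M (ρ s) a' = 0 := fun s a' ha' =>
      if_neg fun hle => ha' (mem_subtype.mpr ((hgS s (mem_subtype.mp s.2)).2.2 a' a'.2 hle))
    -- specialising `X (a, b) ↦ [b = g a]` turns the square submatrix into the identity
    have hspec : (MvPolynomial.eval fun p : α × α => if p.2 = g p.1 then 1 else 0).mapMatrix
        (M.submatrix ρ Subtype.val) = 1 := by
      ext s t
      have hs := mem_subtype.mp s.2
      have ht := mem_subtype.mp t.2
      simp only [RingHom.mapMatrix_apply, map_apply, submatrix, of_apply, M, ρ]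
      by_cases hst : s = t
      · subst hst; simp [(hgS _ hs).1]
      · have : g s ≠ g t := fun he => hst (Subtype.ext (Subtype.ext (hg hs ht he)))
        rw [one_apply_ne hst]
        split_ifs <;> simp [this]
    refine ⟨_, ρ, mem_subtype.mpr haS, hzero, fun hdet => zero_ne_one (α := ℤ) ?_⟩
    rw [← det_one (n := S.subtype (· ∈ A)), ← hspec, ← RingHom.map_det, hdet, map_zero]

namespace Hibi

lemma mdeg_mono {r : ℕ} {m m' : Fin r → ℕ} (h : m ≤ m') : mdeg m ≤ mdeg m' :=
  Finset.sum_le_sum fun i _ => h i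

lemma eq_of_le_of_mdeg_le {r : ℕ} {m m' : Fin r → ℕ} (h : m ≤ m') (hd : mdeg m' ≤ mdeg m) :
    m = m' :=
  funext fun i => (Finset.sum_eq_sum_iff_of_le fun i _ => h i).mp
    (le_antisymm (mdeg_mono h) hd) i (Finset.mem_univ i)

lemma mdeg_eq_mdeg_init_add {r : ℕ} (m : Fin (r + 1) → ℕ) :
    mdeg m = mdeg (Fin.init m) + m (Fin.last r) := by
  simp [mdeg, Fin.sum_univ_castSucc, Fin.init]

lemma mdeg_snoc {r : ℕ} (q : Fin r → ℕ) (y : ℕ) :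
    mdeg (Fin.snoc q y : Fin (r + 1) → ℕ) = mdeg q + y := by
  simp [mdeg_eq_mdeg_init_add]

lemma init_mono {r : ℕ} {m m' : Fin (r + 1) → ℕ} (h : m ≤ m') : Fin.init m ≤ Fin.init m' :=
  fun i => h i.castSucc

lemma snoc_le_snoc {r : ℕ} {q q' : Fin r → ℕ} {y y' : ℕ} (hq : q ≤ q') (hy : y ≤ y') :
    (Fin.snoc q y : Fin (r + 1) → ℕ) ≤ Fin.snoc q' y' := by
  intro i
  induction i using Fin.lastCases with
  | last => simpa using hy
  | cast i => simpa using hq i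

lemma exists_mem_maxMons_le {r : ℕ} {X : Finset (Fin r → ℕ)} {m : Fin r → ℕ} (hm : m ∈ X) :
    ∃ P ∈ maxMons X, m ≤ P := by
  obtain ⟨P, hP, hmax⟩ := Finset.exists_max_image (X.filter (m ≤ ·)) mdeg ⟨m, by simp [hm]⟩
  rw [Finset.mem_filter] at hP
  refine ⟨P, Finset.mem_filter.mpr ⟨hP.1, fun P' hP' hle => ?_⟩, hP.2⟩
  exact (eq_of_le_of_mdeg_le hle (hmax P' (Finset.mem_filter.mpr ⟨hP', hP.2.trans hle⟩))).symm

/- `ℕ × [0, b]` is the disjoint union of the hooks `{s} × [0, b - s] ∪ [s, ∞) × {b - s}`,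
`s ≤ b`. The point `(x, y)` lies on hook `hookIndex b x y`, and the point of hook `s` of total
degree `κ ≥ s` is `(hookFst b s κ, hookSnd b s κ)`. -/

def hookIndex (b x y : ℕ) : ℕ := if x + y ≤ b then x else b - y

def hookFst (b s κ : ℕ) : ℕ := if κ ≤ b then s else κ + s - b

def hookSnd (b s κ : ℕ) : ℕ := if κ ≤ b then κ - s else b - s

section Hook

variable {b s κ κ' x y : ℕ}

lemma hookIndex_le_left (hy : y ≤ b) : hookIndex b x y ≤ x := by
  unfold hookIndex; split <;> omega

lemma hookIndex_le_right : hookIndex b x y ≤ b := by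
  unfold hookIndex; split <;> omega

lemma add_hookIndex_le (hy : y ≤ b) : y + hookIndex b x y ≤ b := by
  unfold hookIndex; split <;> omega

lemma hookFst_add_hookSnd (hs : s ≤ b) (hκ : s ≤ κ) : hookFst b s κ + hookSnd b s κ = κ := by
  unfold hookFst hookSnd; split <;> omega

lemma hookSnd_le : hookSnd b s κ ≤ b := by
  unfold hookSnd; split <;> omega

lemma hookFst_add_le {t M : ℕ} (h : s + t ≤ M) (h' : κ + s + t ≤ M + b) :
    hookFst b s κ + t ≤ M := by
  unfold hookFst; split <;> omega

lemma hookIndex_hookFst_hookSnd (hs : s ≤ b) (hκ : s ≤ κ) :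
    hookIndex b (hookFst b s κ) (hookSnd b s κ) = s := by
  unfold hookIndex hookFst hookSnd; split_ifs <;> omega

lemma hookFst_mono (h : κ ≤ κ') : hookFst b s κ ≤ hookFst b s κ' := by
  unfold hookFst; split_ifs <;> omega

lemma hookSnd_mono (hκ : s ≤ κ) (h : κ ≤ κ') : hookSnd b s κ ≤ hookSnd b s κ' := by
  unfold hookSnd; split_ifs <;> omega

lemma hookFst_hookIndex (hy : y ≤ b) : hookFst b (hookIndex b x y) (x + y) = x := by
  unfold hookIndex hookFst; split_ifs <;> omega

lemma hookSnd_hookIndex (hy : y ≤ b) : hookSnd b (hookIndex b x y) (x + y) = y := by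
  unfold hookIndex hookSnd; split_ifs <;> omega

end Hook

/-- A symmetric chain decomposition of the divisors of `P`: the chain through `m ≤ P` is
`k ↦ F m k` for `lo m ≤ k ≤ mdeg P - lo m`. -/
structure IsSymmChainDecomp {r : ℕ} (P : Fin r → ℕ) (F : (Fin r → ℕ) → ℕ → (Fin r → ℕ))
    (lo : (Fin r → ℕ) → ℕ) : Prop where
  lo_le_mdeg : ∀ m ≤ P, lo m ≤ mdeg m
  mdeg_add_lo_le : ∀ m ≤ P, mdeg m + lo m ≤ mdeg P
  F_mdeg_self : ∀ m ≤ P, F m (mdeg m) = m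
  F_le : ∀ m ≤ P, ∀ k, lo m ≤ k → k + lo m ≤ mdeg P → F m k ≤ P
  mdeg_F : ∀ m ≤ P, ∀ k, lo m ≤ k → k + lo m ≤ mdeg P → mdeg (F m k) = k
  lo_F : ∀ m ≤ P, ∀ k, lo m ≤ k → k + lo m ≤ mdeg P → lo (F m k) = lo m
  F_mono : ∀ m ≤ P, ∀ k k', lo m ≤ k → k ≤ k' → k' + lo m ≤ mdeg P → F m k ≤ F m k'
  F_F : ∀ m ≤ P, ∀ k, lo m ≤ k → k + lo m ≤ mdeg P →
    ∀ k', lo m ≤ k' → k' + lo m ≤ mdeg P → F (F m k) k' = F m k'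

lemma isSymmChainDecomp_fin_zero (P : Fin 0 → ℕ) :
    IsSymmChainDecomp P (fun m _ => m) (fun _ => 0) := by
  have hdeg : ∀ m : Fin 0 → ℕ, mdeg m = 0 := fun m => by simp [mdeg]
  have hle : ∀ m m' : Fin 0 → ℕ, m ≤ m' := fun m m' i => i.elim0
  exact ⟨fun _ _ => le_rfl, fun _ _ => by simp [hdeg], fun _ _ => rfl,
    fun _ _ _ _ _ => hle _ _, fun _ _ _ _ hk => by simp [hdeg] at hk ⊢; omega,
    fun _ _ _ _ _ => rfl, fun _ _ _ _ _ _ _ => le_rfl, fun _ _ _ _ _ _ _ _ => rfl⟩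

section Snoc

variable {r : ℕ} (F₀ : (Fin r → ℕ) → ℕ → (Fin r → ℕ)) (lo₀ : (Fin r → ℕ) → ℕ) (b : ℕ)

/- The decomposition of the divisors of `Fin.snoc P b` built from one of `P`: `Fin.init m` sits
at offset `mdeg (Fin.init m) - lo₀ (Fin.init m)` on its chain, and the pair
(offset, `m (Fin.last r)`) is moved along its hook in (chain) × `[0, b]`. -/
def snocHookIndex (m : Fin (r + 1) → ℕ) : ℕ :=
  hookIndex b (mdeg (Fin.init m) - lo₀ (Fin.init m)) (m (Fin.last r))

def snocLo (m : Fin (r + 1) → ℕ) : ℕ := lo₀ (Fin.init m) + snocHookIndex lo₀ b m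

def snocF (m : Fin (r + 1) → ℕ) (k : ℕ) : Fin (r + 1) → ℕ :=
  Fin.snoc
    (F₀ (Fin.init m) (lo₀ (Fin.init m) + hookFst b (snocHookIndex lo₀ b m) (k - lo₀ (Fin.init m))))
    (hookSnd b (snocHookIndex lo₀ b m) (k - lo₀ (Fin.init m)))

variable {F₀ lo₀ b} {P : Fin r → ℕ} {m : Fin (r + 1) → ℕ} {k : ℕ}

lemma init_le_of_le_snoc (hm : m ≤ Fin.snoc P b) : Fin.init m ≤ P := by
  simpa using init_mono hm

lemma last_le_of_le_snoc (hm : m ≤ Fin.snoc P b) : m (Fin.last r) ≤ b := by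
  simpa using hm (Fin.last r)

lemma snocHookIndex_le : snocHookIndex lo₀ b m ≤ b := hookIndex_le_right

lemma snocLo_le_mdeg (h₀ : IsSymmChainDecomp P F₀ lo₀) (hm : m ≤ Fin.snoc P b) :
    snocLo lo₀ b m ≤ mdeg m := by
  have := h₀.lo_le_mdeg _ (init_le_of_le_snoc hm)
  have := hookIndex_le_left (x := mdeg (Fin.init m) - lo₀ (Fin.init m)) (last_le_of_le_snoc hm)
  rw [mdeg_eq_mdeg_init_add m]
  unfold snocLo snocHookIndex
  omega

lemma mdeg_add_snocLo_le (h₀ : IsSymmChainDecomp P F₀ lo₀) (hm : m ≤ Fin.snoc P b) :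
    mdeg m + snocLo lo₀ b m ≤ mdeg (Fin.snoc P b : Fin (r + 1) → ℕ) := by
  have := h₀.lo_le_mdeg _ (init_le_of_le_snoc hm)
  have := h₀.mdeg_add_lo_le _ (init_le_of_le_snoc hm)
  have := add_hookIndex_le (x := mdeg (Fin.init m) - lo₀ (Fin.init m)) (last_le_of_le_snoc hm)
  rw [mdeg_eq_mdeg_init_add m, mdeg_snoc]
  unfold snocLo snocHookIndex
  omega

lemma snocF_mdeg_self (h₀ : IsSymmChainDecomp P F₀ lo₀) (hm : m ≤ Fin.snoc P b) :
    snocF F₀ lo₀ b m (mdeg m) = m := by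
  have hlo := h₀.lo_le_mdeg _ (init_le_of_le_snoc hm)
  have hκ : mdeg m - lo₀ (Fin.init m) =
      (mdeg (Fin.init m) - lo₀ (Fin.init m)) + m (Fin.last r) := by
    rw [mdeg_eq_mdeg_init_add m]; omega
  unfold snocF snocHookIndex
  rw [hκ, hookFst_hookIndex (last_le_of_le_snoc hm), hookSnd_hookIndex (last_le_of_le_snoc hm),
    Nat.add_sub_cancel' hlo, h₀.F_mdeg_self _ (init_le_of_le_snoc hm), Fin.snoc_init_self]

lemma snoc_window (h₀ : IsSymmChainDecomp P F₀ lo₀) (hm : m ≤ Fin.snoc P b)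
    (hk : snocLo lo₀ b m ≤ k) (hk' : k + snocLo lo₀ b m ≤ mdeg (Fin.snoc P b : Fin (r + 1) → ℕ)) :
    snocHookIndex lo₀ b m ≤ k - lo₀ (Fin.init m) ∧
      lo₀ (Fin.init m) + hookFst b (snocHookIndex lo₀ b m) (k - lo₀ (Fin.init m)) +
        lo₀ (Fin.init m) ≤ mdeg P := by
  have := h₀.lo_le_mdeg _ (init_le_of_le_snoc hm)
  have := h₀.mdeg_add_lo_le _ (init_le_of_le_snoc hm)
  have := hookIndex_le_left (x := mdeg (Fin.init m) - lo₀ (Fin.init m)) (last_le_of_le_snoc hm)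
  rw [mdeg_snoc] at hk'
  unfold snocLo snocHookIndex at *
  refine ⟨by omega, ?_⟩
  have := hookFst_add_le (b := b) (κ := k - lo₀ (Fin.init m))
    (s := hookIndex b (mdeg (Fin.init m) - lo₀ (Fin.init m)) (m (Fin.last r)))
    (t := 2 * lo₀ (Fin.init m)) (M := mdeg P) (by omega) (by omega)
  omega

lemma snocF_le (h₀ : IsSymmChainDecomp P F₀ lo₀) (hm : m ≤ Fin.snoc P b)
    (hk : snocLo lo₀ b m ≤ k) (hk' : k + snocLo lo₀ b m ≤ mdeg (Fin.snoc P b : Fin (r + 1) → ℕ)) :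
    snocF F₀ lo₀ b m k ≤ Fin.snoc P b :=
  snoc_le_snoc (h₀.F_le _ (init_le_of_le_snoc hm) _ (Nat.le_add_right _ _)
    (snoc_window h₀ hm hk hk').2) hookSnd_le

lemma mdeg_snocF (h₀ : IsSymmChainDecomp P F₀ lo₀) (hm : m ≤ Fin.snoc P b)
    (hk : snocLo lo₀ b m ≤ k) (hk' : k + snocLo lo₀ b m ≤ mdeg (Fin.snoc P b : Fin (r + 1) → ℕ)) :
    mdeg (snocF F₀ lo₀ b m k) = k := by
  obtain ⟨hκ, hwin⟩ := snoc_window h₀ hm hk hk'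
  rw [snocF, mdeg_snoc, h₀.mdeg_F _ (init_le_of_le_snoc hm) _ (Nat.le_add_right _ _) hwin,
    add_assoc, hookFst_add_hookSnd snocHookIndex_le hκ]
  unfold snocLo at hk
  omega

lemma lo_init_snocF (h₀ : IsSymmChainDecomp P F₀ lo₀) (hm : m ≤ Fin.snoc P b)
    (hk : snocLo lo₀ b m ≤ k) (hk' : k + snocLo lo₀ b m ≤ mdeg (Fin.snoc P b : Fin (r + 1) → ℕ)) :
    lo₀ (Fin.init (snocF F₀ lo₀ b m k)) = lo₀ (Fin.init m) := by
  rw [snocF, Fin.init_snoc, h₀.lo_F _ (init_le_of_le_snoc hm) _ (Nat.le_add_right _ _)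
    (snoc_window h₀ hm hk hk').2]

lemma snocHookIndex_snocF (h₀ : IsSymmChainDecomp P F₀ lo₀) (hm : m ≤ Fin.snoc P b)
    (hk : snocLo lo₀ b m ≤ k) (hk' : k + snocLo lo₀ b m ≤ mdeg (Fin.snoc P b : Fin (r + 1) → ℕ)) :
    snocHookIndex lo₀ b (snocF F₀ lo₀ b m k) = snocHookIndex lo₀ b m := by
  obtain ⟨hκ, hwin⟩ := snoc_window h₀ hm hk hk'
  rw [snocHookIndex, lo_init_snocF h₀ hm hk hk', snocF, Fin.init_snoc, Fin.snoc_last,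
    h₀.mdeg_F _ (init_le_of_le_snoc hm) _ (Nat.le_add_right _ _) hwin, Nat.add_sub_cancel_left,
    hookIndex_hookFst_hookSnd snocHookIndex_le hκ]

lemma snocLo_snocF (h₀ : IsSymmChainDecomp P F₀ lo₀) (hm : m ≤ Fin.snoc P b)
    (hk : snocLo lo₀ b m ≤ k) (hk' : k + snocLo lo₀ b m ≤ mdeg (Fin.snoc P b : Fin (r + 1) → ℕ)) :
    snocLo lo₀ b (snocF F₀ lo₀ b m k) = snocLo lo₀ b m := by
  rw [snocLo, snocLo, lo_init_snocF h₀ hm hk hk', snocHookIndex_snocF h₀ hm hk hk']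

lemma snocF_mono (h₀ : IsSymmChainDecomp P F₀ lo₀) (hm : m ≤ Fin.snoc P b)
    (hk : snocLo lo₀ b m ≤ k) {k' : ℕ} (hkk' : k ≤ k')
    (hk' : k' + snocLo lo₀ b m ≤ mdeg (Fin.snoc P b : Fin (r + 1) → ℕ)) :
    snocF F₀ lo₀ b m k ≤ snocF F₀ lo₀ b m k' := by
  obtain ⟨hκ, -⟩ := snoc_window h₀ hm hk (by omega)
  obtain ⟨-, hwin'⟩ := snoc_window h₀ hm (hk.trans hkk') hk'
  have hκκ' : k - lo₀ (Fin.init m) ≤ k' - lo₀ (Fin.init m) := Nat.sub_le_sub_right hkk' _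
  exact snoc_le_snoc (h₀.F_mono _ (init_le_of_le_snoc hm) _ _ (Nat.le_add_right _ _)
    (Nat.add_le_add_left (hookFst_mono hκκ') _) hwin') (hookSnd_mono hκ hκκ')

lemma snocF_snocF (h₀ : IsSymmChainDecomp P F₀ lo₀) (hm : m ≤ Fin.snoc P b)
    (hk : snocLo lo₀ b m ≤ k) (hk' : k + snocLo lo₀ b m ≤ mdeg (Fin.snoc P b : Fin (r + 1) → ℕ))
    {k' : ℕ} (hk₂ : snocLo lo₀ b m ≤ k')
    (hk₂' : k' + snocLo lo₀ b m ≤ mdeg (Fin.snoc P b : Fin (r + 1) → ℕ)) :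
    snocF F₀ lo₀ b (snocF F₀ lo₀ b m k) k' = snocF F₀ lo₀ b m k' := by
  obtain ⟨-, hwin⟩ := snoc_window h₀ hm hk hk'
  obtain ⟨-, hwin'⟩ := snoc_window h₀ hm hk₂ hk₂'
  rw [snocF.eq_1 F₀ lo₀ b (snocF F₀ lo₀ b m k), lo_init_snocF h₀ hm hk hk',
    snocHookIndex_snocF h₀ hm hk hk']
  simp only [snocF, Fin.init_snoc]
  rw [h₀.F_F _ (init_le_of_le_snoc hm) _ (Nat.le_add_right _ _) hwin _ (Nat.le_add_right _ _) hwin']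

end Snoc

theorem IsSymmChainDecomp.snoc {r : ℕ} {P : Fin r → ℕ} {F₀ : (Fin r → ℕ) → ℕ → (Fin r → ℕ)}
    {lo₀ : (Fin r → ℕ) → ℕ} (h₀ : IsSymmChainDecomp P F₀ lo₀) (b : ℕ) :
    IsSymmChainDecomp (Fin.snoc P b : Fin (r + 1) → ℕ) (snocF F₀ lo₀ b) (snocLo lo₀ b) where
  lo_le_mdeg _ hm := snocLo_le_mdeg h₀ hm
  mdeg_add_lo_le _ hm := mdeg_add_snocLo_le h₀ hm
  F_mdeg_self _ hm := snocF_mdeg_self h₀ hm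
  F_le _ hm _ hk hk' := snocF_le h₀ hm hk hk'
  mdeg_F _ hm _ hk hk' := mdeg_snocF h₀ hm hk hk'
  lo_F _ hm _ hk hk' := snocLo_snocF h₀ hm hk hk'
  F_mono _ hm _ _ hk hkk' hk' := snocF_mono h₀ hm hk hkk' hk'
  F_F _ hm _ hk hk' _ hk₂ hk₂' := snocF_snocF h₀ hm hk hk' hk₂ hk₂'

theorem exists_isSymmChainDecomp : ∀ {r : ℕ} (P : Fin r → ℕ), ∃ F lo, IsSymmChainDecomp P F lo
  | 0, P => ⟨_, _, isSymmChainDecomp_fin_zero P⟩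
  | r + 1, P => by
    obtain ⟨F₀, lo₀, h₀⟩ := exists_isSymmChainDecomp (Fin.init P)
    rw [← Fin.snoc_init_self P]
    exact ⟨_, _, h₀.snoc (P (Fin.last r))⟩

theorem exists_injOn_le_of_add_le_mdeg {r : ℕ} (P : Fin r → ℕ) {i j : ℕ} (hij : i ≤ j)
    (hijP : i + j ≤ mdeg P) :
    ∃ g : (Fin r → ℕ) → (Fin r → ℕ), Set.InjOn g {m | m ≤ P ∧ mdeg m = i} ∧
      ∀ m ≤ P, mdeg m = i → m ≤ g m ∧ g m ≤ P ∧ mdeg (g m) = j := by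
  obtain ⟨F, lo, h⟩ := exists_isSymmChainDecomp P
  have hlo : ∀ m ≤ P, mdeg m = i → lo m ≤ i := fun m hm hmi => hmi ▸ h.lo_le_mdeg m hm
  refine ⟨(F · j), fun m ⟨hm, hmi⟩ m' ⟨hm', hm'i⟩ he => ?_, fun m hm hmi => ?_⟩
  · have := hlo m hm hmi
    have := hlo m' hm' hm'i
    calc m = F (F m j) i := by
          rw [h.F_F m hm j (by omega) (by omega) i (by omega) (by omega), ← hmi, h.F_mdeg_self m hm]
      _ = F (F m' j) i := congrArg (F · i) he
      _ = m' := by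
          rw [h.F_F m' hm' j (by omega) (by omega) i (by omega) (by omega), ← hm'i,
            h.F_mdeg_self m' hm']
  · have := hlo m hm hmi
    refine ⟨?_, h.F_le m hm j (by omega) (by omega), h.mdeg_F m hm j (by omega) (by omega)⟩
    calc m = F m (mdeg m) := (h.F_mdeg_self m hm).symm
      _ ≤ F m j := h.F_mono m hm _ _ (h.lo_le_mdeg m hm) (by omega) (by omega)

theorem hVec_le_hVec {r : ℕ} {X : Finset (Fin r → ℕ)} {e : ℕ} (hX : IsOrderIdeal X)
    (hpure : IsPure X e) {i j : ℕ} (hij : i ≤ j) (hije : i + j ≤ e) : hVec X i ≤ hVec X j := by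
  refine Finset.card_le_card_of_forall_exists_injOn_le fun a ha => ?_
  obtain ⟨haX, -⟩ := Finset.mem_filter.mp ha
  obtain ⟨P, hPmax, haP⟩ := exists_mem_maxMons_le haX
  have hPX : P ∈ X := (Finset.mem_filter.mp hPmax).1
  obtain ⟨g, hginj, hg⟩ := exists_injOn_le_of_add_le_mdeg P hij (hpure P hPmax ▸ hije)
  refine ⟨_, (Finset.mem_filter (p := (· ≤ P))).mpr ⟨ha, haP⟩, g,
    hginj.mono fun m hm => ?_, fun m hm => ?_⟩
  · obtain ⟨hmA, hmP⟩ := Finset.mem_filter.mp hm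
    exact ⟨hmP, (Finset.mem_filter.mp hmA).2⟩
  · obtain ⟨hmA, hmP⟩ := Finset.mem_filter.mp hm
    obtain ⟨hmg, hgP, hgj⟩ := hg m hmP (Finset.mem_filter.mp hmA).2
    exact ⟨hmg, Finset.mem_filter.mpr ⟨hX.2 P hPX _ hgP, hgj⟩,
      fun a' ha' hle => Finset.mem_filter.mpr ⟨ha', hle.trans hgP⟩⟩

end Hibi

/-- Hibi's theorem: if `X` is a pure monomial order ideal of socle degree `e`, then
`h_i ≤ h_j` whenever `0 ≤ i ≤ j ≤ e - i`; in particular the `h`-vector is flawless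
(`h_i ≤ h_{e-i}` for `i ≤ e/2`) and its first half is nondecreasing. -/
theorem stmt2 {r : ℕ} (X : Finset (Fin r → ℕ)) (e : ℕ)
    (hX : IsOrderIdeal X) (hpure : IsPure X e) :
    (∀ i j, i ≤ j → i + j ≤ e → hVec X i ≤ hVec X j) ∧
    (∀ i, i ≤ e / 2 → hVec X i ≤ hVec X (e - i)) ∧
    (∀ i, i + 1 ≤ e / 2 → hVec X i ≤ hVec X (i + 1)) :=
  ⟨fun _ _ hij hije => Hibi.hVec_le_hVec hX hpure hij hije,
    fun _ hi => Hibi.hVec_le_hVec hX hpure (by omega) (by omega),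
    fun _ hi => Hibi.hVec_le_hVec hX hpure (by omega) (by omega)⟩
end

section
/- Every pure O-sequence of socle degree at most 3 is unimodal. -/
open scoped Classical

/-- a sequence is unimodal if it has no strict interior valley -/
def UnimodalFun (h : ℕ → ℕ) : Prop :=
  ∀ i j k, i ≤ j → j ≤ k → min (h i) (h k) ≤ h j

/-!
For `e ≤ 3` the `h`-vector is `1, h₁, h₂, h₃` followed by zeros, with every `hᵢ` positive up to
`e`, so the only possible valley is `h₁ > h₂ < h₃`; it suffices to prove `h₁ ≤ h₂` when `e = 3`.
Think of the variables `xₐ ∈ X` as vertices and the degree-two monomials of `X` as edges `xₐx_b`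
and loops `xₐ²`. Each vertex divides a socle monomial `xₐx_bx_c`, so it has a loop, or two distinct
edges, or an edge to a vertex with a loop. Letting every edge hand out two units of charge, a loop
to its vertex and an edge preferably to an endpoint without a loop, every vertex receives at least
two units, whence `2 h₁ ≤ 2 h₂`.
-/

namespace PureOSequence

variable {r : ℕ}

lemma mdeg_add (m m' : Fin r → ℕ) : mdeg (m + m') = mdeg m + mdeg m' :=
  Finset.sum_add_distrib

lemma mdeg_single (a : Fin r) (c : ℕ) : mdeg (Pi.single a c) = c := by
  simp [mdeg]

lemma mdeg_mono {m m' : Fin r → ℕ} (h : m ≤ m') : mdeg m ≤ mdeg m' :=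
  Finset.sum_le_sum fun i _ => h i

lemma mdeg_tsub {m m' : Fin r → ℕ} (h : m' ≤ m) : mdeg (m - m') = mdeg m - mdeg m' := by
  have := mdeg_add (m - m') m'
  rw [tsub_add_cancel_of_le h] at this
  omega

lemma eq_zero_of_mdeg_eq_zero {m : Fin r → ℕ} (h : mdeg m = 0) : m = 0 :=
  funext fun i => Finset.sum_eq_zero_iff.mp h i (Finset.mem_univ i)

lemma single_one_le_iff {a : Fin r} {m : Fin r → ℕ} : Pi.single a 1 ≤ m ↔ 1 ≤ m a := by
  refine ⟨fun h => by simpa using h a, fun h x => ?_⟩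
  by_cases hx : x = a
  · subst hx; simpa using h
  · simp [hx]

lemma exists_single_one_le_of_mdeg_pos {m : Fin r → ℕ} (h : 0 < mdeg m) :
    ∃ a, Pi.single a 1 ≤ m := by
  obtain ⟨a, -, ha⟩ := Finset.exists_ne_zero_of_sum_ne_zero h.ne'
  exact ⟨a, single_one_le_iff.mpr (Nat.one_le_iff_ne_zero.mpr ha)⟩

lemma exists_eq_single_add {m : Fin r → ℕ} {n : ℕ} (h : mdeg m = n + 1) :
    ∃ a m', m = Pi.single a 1 + m' ∧ mdeg m' = n := by
  obtain ⟨a, ha⟩ := exists_single_one_le_of_mdeg_pos (m := m) (by omega)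
  refine ⟨a, m - Pi.single a 1, (add_tsub_cancel_of_le ha).symm, ?_⟩
  rw [mdeg_tsub ha, mdeg_single, h, Nat.add_sub_cancel]

lemma exists_le_mdeg_eq {m : Fin r → ℕ} {i : ℕ} (hi : i ≤ mdeg m) :
    ∃ m' ≤ m, mdeg m' = i := by
  induction i with
  | zero => exact ⟨0, zero_le, by simp [mdeg]⟩
  | succ i ih =>
    obtain ⟨m', hm', hdeg⟩ := ih (by omega)
    obtain ⟨a, ha⟩ := exists_single_one_le_of_mdeg_pos (m := m - m')
      (by rw [mdeg_tsub hm']; omega)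
    refine ⟨m' + Pi.single a 1, ?_, by rw [mdeg_add, mdeg_single, hdeg]⟩
    exact (le_tsub_iff_left hm').mp ha

lemma eq_single_add_single_add_single {a : Fin r} {g : Fin r → ℕ} (ha : Pi.single a 1 ≤ g)
    (hg : mdeg g = 3) : ∃ b c, g = Pi.single a 1 + Pi.single b 1 + Pi.single c 1 := by
  have hrest : mdeg (g - Pi.single a 1) = 1 + 1 := by rw [mdeg_tsub ha, mdeg_single, hg]
  obtain ⟨b, m, hm, hdeg⟩ := exists_eq_single_add hrest
  obtain ⟨c, m', rfl, hdeg'⟩ := exists_eq_single_add hdeg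
  refine ⟨b, c, ?_⟩
  rw [← add_tsub_cancel_of_le ha, hm, eq_zero_of_mdeg_eq_zero hdeg']
  abel

section Charge

variable (X : Finset (Fin r → ℕ))

def loopIndicator (a : Fin r) : ℤ :=
  if Pi.single a 1 + Pi.single a 1 ∈ X then 1 else 0

/-- With `ℓ = loopIndicator X`, the monomial `xₐ²` gives `2` to `a`, and `xₐx_b` (`a ≠ b`) gives
`1 + ℓ b - ℓ a` to `a`; in either case its charges add up to `2`. -/
def charge (s : Fin r → ℕ) (a : Fin r) : ℤ :=
  s a * (1 + ∑ v, s v * loopIndicator X v - 2 * loopIndicator X a)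

variable {X}

lemma loopIndicator_nonneg (a : Fin r) : 0 ≤ loopIndicator X a := by
  unfold loopIndicator; split_ifs <;> simp

lemma loopIndicator_le_one (a : Fin r) : loopIndicator X a ≤ 1 := by
  unfold loopIndicator; split_ifs <;> simp

lemma charge_nonneg (s : Fin r → ℕ) (a : Fin r) : 0 ≤ charge X s a := by
  have hterm : (s a : ℤ) * loopIndicator X a ≤ ∑ v, s v * loopIndicator X v :=
    Finset.single_le_sum (f := fun v => (s v : ℤ) * loopIndicator X v)
      (fun v _ => mul_nonneg (by positivity) (loopIndicator_nonneg v)) (Finset.mem_univ a)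
  rcases Nat.eq_zero_or_pos (s a) with h | h
  · simp [charge, h]
  · have h' : (1 : ℤ) ≤ s a := by exact_mod_cast h
    have hℓ := loopIndicator_le_one (X := X) a
    have hℓ' := mul_nonneg (sub_nonneg.mpr h') (loopIndicator_nonneg (X := X) a)
    exact mul_nonneg (by positivity) (by linarith)

lemma sum_charge {s : Fin r → ℕ} (hs : mdeg s = 2) : ∑ a, charge X s a = 2 := by
  have hs' : ∑ a, (s a : ℤ) = 2 := by exact_mod_cast hs
  simp only [charge, mul_sub, mul_add, Finset.sum_sub_distrib, Finset.sum_add_distrib,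
    ← Finset.sum_mul, hs', mul_left_comm _ (2 : ℤ), ← Finset.mul_sum]
  ring

lemma charge_loop (a : Fin r) : charge X (Pi.single a 1 + Pi.single a 1) a = 2 := by
  simp [charge, Pi.single_apply, add_mul, Finset.sum_add_distrib]
  ring

lemma charge_edge {a b : Fin r} (hab : a ≠ b) :
    charge X (Pi.single a 1 + Pi.single b 1) a = 1 + loopIndicator X b - loopIndicator X a := by
  simp [charge, Pi.single_apply, add_mul, Finset.sum_add_distrib, hab]
  ring

lemma two_le_sum_charge (hX : IsOrderIdeal X) {a : Fin r} {g : Fin r → ℕ} (hgX : g ∈ X)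
    (hg : mdeg g = 3) (ha : Pi.single a 1 ≤ g) :
    2 ≤ ∑ s ∈ X.filter (fun m => mdeg m = 2), charge X s a := by
  set S := X.filter (fun m => mdeg m = 2)
  obtain ⟨b, c, rfl⟩ := eq_single_add_single_add_single ha hg
  have hdown := hX.2 _ hgX
  have hS {x y : Fin r}
      (hle : Pi.single x 1 + Pi.single y 1 ≤ Pi.single a 1 + Pi.single b 1 + Pi.single c 1) :
      Pi.single x 1 + Pi.single y 1 ∈ S :=
    Finset.mem_filter.mpr ⟨hdown _ hle, by rw [mdeg_add, mdeg_single, mdeg_single]⟩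
  have hle_sum {s} (hs : s ∈ S) : charge X s a ≤ ∑ s ∈ S, charge X s a :=
    Finset.single_le_sum (fun s _ => charge_nonneg s a) hs
  by_cases hloop : Pi.single a 1 + Pi.single a 1 ∈ X
  · rw [← charge_loop (X := X) a]
    exact hle_sum (Finset.mem_filter.mpr ⟨hloop, by rw [mdeg_add, mdeg_single]⟩)
  have hℓa : loopIndicator X a = 0 := if_neg hloop
  have hab : a ≠ b := by
    rintro rfl
    exact hloop (hdown _ le_self_add)
  have hac : a ≠ c := by
    rintro rfl
    exact hloop (hdown _ (by rw [add_right_comm]; exact le_self_add))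
  have hSb : Pi.single a 1 + Pi.single b 1 ∈ S := hS le_self_add
  have hSc : Pi.single a 1 + Pi.single c 1 ∈ S := hS (by rw [add_right_comm]; exact le_self_add)
  by_cases hbc : b = c
  · subst hbc
    have hℓb : loopIndicator X b = 1 := if_pos (hdown _ (by rw [add_assoc]; exact le_add_self))
    have := hle_sum hSb
    rw [charge_edge hab, hℓa, hℓb] at this
    linarith
  · have hne :
        (Pi.single a 1 + Pi.single b 1 : Fin r → ℕ) ≠ Pi.single a 1 + Pi.single c 1 := by
      intro h
      simpa [hab.symm, hbc] using congrFun h b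
    have hpair := Finset.sum_le_sum_of_subset_of_nonneg (f := fun s => charge X s a)
      (Finset.insert_subset hSb (Finset.singleton_subset_iff.mpr hSc))
      fun s _ _ => charge_nonneg s a
    rw [Finset.sum_pair hne, charge_edge hab, charge_edge hac, hℓa] at hpair
    linarith [loopIndicator_nonneg (X := X) b, loopIndicator_nonneg (X := X) c]

lemma hVec_one_le_hVec_two (hX : IsOrderIdeal X)
    (h3 : ∀ a, Pi.single a 1 ∈ X → ∃ g ∈ X, mdeg g = 3 ∧ Pi.single a 1 ≤ g) :
    hVec X 1 ≤ hVec X 2 := by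
  set A := Finset.univ.filter fun a : Fin r => Pi.single a 1 ∈ X
  set S := X.filter fun m => mdeg m = 2
  have hA : hVec X 1 ≤ A.card := by
    refine Finset.card_le_card_of_surjOn (fun a => Pi.single a 1) fun m hm => ?_
    obtain ⟨hmX, hdeg⟩ := Finset.mem_filter.mp hm
    obtain ⟨a, m', rfl, h0⟩ := exists_eq_single_add (n := 0) hdeg
    rw [eq_zero_of_mdeg_eq_zero h0, add_zero] at hmX ⊢
    exact ⟨a, by simpa [A] using hmX, rfl⟩
  have hAS : (2 * A.card : ℤ) ≤ 2 * S.card := calc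
    (2 * A.card : ℤ) = ∑ a ∈ A, 2 := by simp [mul_comm]
    _ ≤ ∑ a ∈ A, ∑ s ∈ S, charge X s a := Finset.sum_le_sum fun a ha => by
        obtain ⟨g, hgX, hg, hag⟩ := h3 a (Finset.mem_filter.mp ha).2
        exact two_le_sum_charge hX hgX hg hag
    _ ≤ ∑ a, ∑ s ∈ S, charge X s a :=
        Finset.sum_le_sum_of_subset_of_nonneg (Finset.subset_univ A) fun a _ _ =>
          Finset.sum_nonneg fun s _ => charge_nonneg s a
    _ = ∑ s ∈ S, ∑ a, charge X s a := Finset.sum_comm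
    _ = ∑ s ∈ S, 2 := Finset.sum_congr rfl fun s hs => sum_charge (Finset.mem_filter.mp hs).2
    _ = 2 * S.card := by simp [mul_comm]
  exact hA.trans (by exact_mod_cast (by linarith : (A.card : ℤ) ≤ S.card))

end Charge

section Pure

variable {X : Finset (Fin r → ℕ)} {e : ℕ}

lemma exists_mem_maxMons_le {m : Fin r → ℕ} (hm : m ∈ X) : ∃ g ∈ maxMons X, m ≤ g := by
  obtain ⟨g, hmg, hg⟩ := X.exists_le_maximal hm
  refine ⟨g, Finset.mem_filter.mpr ⟨hg.1, fun m' hm' hgm' => ?_⟩, hmg⟩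
  exact le_antisymm (hg.2 hm' hgm') hgm'

lemma mdeg_le_of_isPure (hpure : IsPure X e) {m : Fin r → ℕ} (hm : m ∈ X) : mdeg m ≤ e := by
  obtain ⟨g, hg, hmg⟩ := exists_mem_maxMons_le hm
  exact (mdeg_mono hmg).trans_eq (hpure g hg)

lemma hVec_eq_zero_of_isPure (hpure : IsPure X e) {i : ℕ} (hi : e < i) : hVec X i = 0 := by
  rw [hVec, Finset.card_eq_zero, Finset.filter_eq_empty_iff]
  intro m hm hdeg
  exact absurd (mdeg_le_of_isPure hpure hm) (by omega)

lemma hVec_pos_of_isPure (hX : IsOrderIdeal X) (hpure : IsPure X e) {i : ℕ} (hi : i ≤ e) :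
    0 < hVec X i := by
  obtain ⟨g, hg, -⟩ := exists_mem_maxMons_le hX.1.choose_spec
  obtain ⟨m, hmg, hdeg⟩ := exists_le_mdeg_eq (hi.trans_eq (hpure g hg).symm)
  have hmX : m ∈ X := hX.2 g (Finset.mem_filter.mp hg).1 m hmg
  exact Finset.card_pos.mpr ⟨m, Finset.mem_filter.mpr ⟨hmX, hdeg⟩⟩

lemma hVec_zero_le_one (X : Finset (Fin r → ℕ)) : hVec X 0 ≤ 1 :=
  Finset.card_le_one.mpr fun m hm m' hm' => by
    rw [eq_zero_of_mdeg_eq_zero (Finset.mem_filter.mp hm).2,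
      eq_zero_of_mdeg_eq_zero (Finset.mem_filter.mp hm').2]

lemma hVec_one_le_hVec_two_of_isPure (hX : IsOrderIdeal X) (hpure : IsPure X 3) :
    hVec X 1 ≤ hVec X 2 :=
  hVec_one_le_hVec_two hX fun _ ha => by
    obtain ⟨g, hg, hag⟩ := exists_mem_maxMons_le ha
    exact ⟨g, (Finset.mem_filter.mp hg).1, hpure g hg, hag⟩

end Pure

end PureOSequence

/-- Every pure `O`-sequence of socle degree at most `3` is unimodal. -/
theorem stmt3 {r : ℕ} (X : Finset (Fin r → ℕ)) (e : ℕ)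
    (hX : IsOrderIdeal X) (hpure : IsPure X e) (he : e ≤ 3) :
    UnimodalFun (hVec X) := by
  intro i j k hij hjk
  rcases hij.eq_or_lt with rfl | hij
  · exact min_le_left _ _
  rcases hjk.eq_or_lt with rfl | hjk
  · exact min_le_right _ _
  rcases lt_or_ge e k with hk | hk
  · simp [PureOSequence.hVec_eq_zero_of_isPure hpure hk]
  have hj : 0 < hVec X j := PureOSequence.hVec_pos_of_isPure hX hpure (by omega)
  rcases Nat.eq_zero_or_pos i with rfl | hi
  · exact (min_le_left _ _).trans ((PureOSequence.hVec_zero_le_one X).trans hj)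
  obtain ⟨rfl, rfl, rfl⟩ : i = 1 ∧ j = 2 ∧ e = 3 := by omega
  exact (min_le_left _ _).trans (PureOSequence.hVec_one_le_hVec_two_of_isPure hX hpure)
end

section
/- The number of pure O-sequences of codimension r, socle degree e, and type 1 equals p_r(e), the number of partitions of e into exactly r parts. -/
open scoped Classical

/-!
An order ideal with a single maximal monomial `a` is the box of divisors of `a`, and its
`h`-vector is the coefficient sequence of `∏ⱼ (1 + X + ⋯ + X ^ aⱼ)`; the condition `h₁ = r`
forces every `aⱼ ≥ 1`, so up to order `a` is a partition of `e` into `r` parts. Conversely the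
partition is recovered from the `h`-vector: multiplying by `(1 - X) ^ r` gives
`∏ⱼ (1 - X ^ (aⱼ + 1))`, and a product of factors `1 - X ^ d` with `d ≥ 1` determines its
exponents, because the smallest one `m` occurs with multiplicity equal to minus the
coefficient of `X ^ m`; cancel that factor and induct.
-/

open Polynomial Finset

section OneSubXPow

variable {R : Type*} [CommRing R]

lemma coeff_zero_prod_one_sub_X_pow {u : Multiset ℕ} (hu : ∀ d ∈ u, 0 < d) :
    ((u.map fun d => (1 - X ^ d : R[X])).prod).coeff 0 = 1 := by
  rw [coeff_zero_multiset_prod, Multiset.map_map]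
  refine Multiset.prod_eq_one fun x hx => ?_
  obtain ⟨d, hd, rfl⟩ := Multiset.mem_map.mp hx
  simp [coeff_X_pow, (hu d hd).ne]

lemma coeff_prod_one_sub_X_pow_of_le {u : Multiset ℕ} {m : ℕ} (hm : 0 < m)
    (hu : ∀ d ∈ u, m ≤ d) :
    ((u.map fun d => (1 - X ^ d : R[X])).prod).coeff m = -(u.count m : R) := by
  induction u using Multiset.induction with
  | empty => simp [coeff_one, hm.ne']
  | cons d u ih =>
    have hu' : ∀ d ∈ u, m ≤ d := fun d' h => hu d' (Multiset.mem_cons_of_mem h)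
    rw [Multiset.map_cons, Multiset.prod_cons, sub_mul, one_mul, coeff_sub, coeff_X_pow_mul',
      ih hu', Multiset.count_cons]
    rcases (hu d (Multiset.mem_cons_self d u)).eq_or_lt with rfl | hlt
    · rw [if_pos le_rfl, Nat.sub_self,
        coeff_zero_prod_one_sub_X_pow fun d' h => hm.trans_le (hu' d' h)]
      rw [if_pos rfl]
      push_cast
      ring
    · rw [if_neg hlt.not_ge]
      simp [hlt.ne]

variable [IsDomain R] [CharZero R]

theorem eq_of_prod_one_sub_X_pow_eq {u v : Multiset ℕ} (hu : ∀ d ∈ u, 0 < d)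
    (hv : ∀ d ∈ v, 0 < d)
    (h : (u.map fun d => (1 - X ^ d : R[X])).prod = (v.map fun d => 1 - X ^ d).prod) :
    u = v := by
  induction u using Multiset.strongInductionOn generalizing v with
  | ih u ih =>
  rcases eq_or_ne (u + v) 0 with huv | huv
  · rw [add_eq_zero] at huv
    rw [huv.1, huv.2]
  obtain ⟨m, hm, hmin⟩ := Multiset.exists_min_image id huv
  have hm0 : 0 < m := (Multiset.mem_add.mp hm).elim (hu m) (hv m)
  have hcount : u.count m = v.count m := by
    have hcoeff := congrArg (coeff · m) h
    rwa [coeff_prod_one_sub_X_pow_of_le hm0 fun d hd => hmin d (Multiset.mem_add.mpr (.inl hd)),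
      coeff_prod_one_sub_X_pow_of_le hm0 fun d hd => hmin d (Multiset.mem_add.mpr (.inr hd)),
      neg_inj, Nat.cast_inj] at hcoeff
  have hmuv : m ∈ u ∧ m ∈ v := by
    have := Multiset.count_pos.mpr hm
    rw [Multiset.count_add] at this
    exact ⟨Multiset.count_pos.mp (by omega), Multiset.count_pos.mp (by omega)⟩
  have hX : (1 - X ^ m : R[X]) ≠ 0 := fun h0 => by
    simpa [coeff_X_pow, hm0.ne] using congrArg (coeff · 0) h0
  rw [← Multiset.cons_erase hmuv.1, ← Multiset.cons_erase hmuv.2] at h ⊢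
  simp only [Multiset.map_cons, Multiset.prod_cons] at h
  rw [ih _ (Multiset.erase_lt.mpr hmuv.1) (fun d hd => hu d (Multiset.mem_of_mem_erase hd))
    (fun d hd => hv d (Multiset.mem_of_mem_erase hd)) (mul_left_cancel₀ hX h)]

end OneSubXPow

/-- The degree-generating polynomial of the divisors of a monomial whose exponents form `s`. -/
noncomputable def boxHilbertPoly (R : Type*) [CommSemiring R] (s : Multiset ℕ) : R[X] :=
  (s.map fun c => ∑ k ∈ range (c + 1), X ^ k).prod

section BoxHilbertPoly

variable {R : Type*}

lemma natDegree_boxHilbertPoly_le [CommSemiring R] (s : Multiset ℕ) :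
    (boxHilbertPoly R s).natDegree ≤ s.sum := by
  refine (natDegree_multiset_prod_le _).trans ?_
  rw [Multiset.map_map]
  refine (Multiset.sum_map_le_sum_map _ (fun c => c) fun c _ => ?_).trans_eq
    (by rw [Multiset.map_id'])
  exact natDegree_sum_le_of_forall_le _ _ fun k hk =>
    (natDegree_X_pow_le k).trans (Nat.lt_succ_iff.mp (mem_range.mp hk))

lemma map_boxHilbertPoly [CommSemiring R] {S : Type*} [CommSemiring S] (f : R →+* S)
    (s : Multiset ℕ) : (boxHilbertPoly R s).map f = boxHilbertPoly S s := by
  simp [boxHilbertPoly, Polynomial.map_multiset_prod, Multiset.map_map, Polynomial.map_sum]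

lemma coeff_boxHilbertPoly_zero [CommSemiring R] (s : Multiset ℕ) :
    (boxHilbertPoly R s).coeff 0 = 1 := by
  rw [boxHilbertPoly, coeff_zero_multiset_prod, Multiset.map_map]
  refine Multiset.prod_eq_one fun x hx => ?_
  obtain ⟨c, -, rfl⟩ := Multiset.mem_map.mp hx
  simp [coeff_X_pow]

lemma coeff_boxHilbertPoly_one [CommSemiring R] (s : Multiset ℕ) :
    (boxHilbertPoly R s).coeff 1 = (s.filter (0 < ·)).card := by
  induction s using Multiset.induction with
  | empty => simp [boxHilbertPoly, coeff_one]
  | cons c s ih =>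
    rw [boxHilbertPoly, Multiset.map_cons, Multiset.prod_cons, ← boxHilbertPoly, coeff_mul,
      Nat.sum_antidiagonal_succ, Nat.antidiagonal_zero, sum_singleton,
      coeff_boxHilbertPoly_zero, ih]
    rcases c.eq_zero_or_pos with rfl | hc
    · simp [coeff_one]
    · simp [coeff_X_pow, hc, add_comm]

lemma boxHilbertPoly_mul_one_sub_X_pow_card [CommRing R] (s : Multiset ℕ) :
    boxHilbertPoly R s * (1 - X) ^ s.card =
      (s.map fun c => (1 - X ^ (c + 1) : R[X])).prod := by
  rw [boxHilbertPoly, ← Multiset.prod_replicate, ← Multiset.map_const', ← Multiset.prod_map_mul]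
  exact congrArg _ (Multiset.map_congr rfl fun c _ => geom_sum_mul_neg X (c + 1))

theorem eq_of_boxHilbertPoly_eq [CommRing R] [IsDomain R] [CharZero R] {s t : Multiset ℕ}
    (hcard : s.card = t.card) (h : boxHilbertPoly R s = boxHilbertPoly R t) : s = t := by
  have h' := congrArg (· * (1 - X : R[X]) ^ s.card) h
  rw [boxHilbertPoly_mul_one_sub_X_pow_card, hcard, boxHilbertPoly_mul_one_sub_X_pow_card] at h'
  refine Multiset.map_injective (add_left_injective 1)
    (eq_of_prod_one_sub_X_pow_eq (R := R) ?_ ?_ ?_)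
  · simp
  · simp
  · simpa [Multiset.map_map] using h'

end BoxHilbertPoly

section Box

variable {r : ℕ}

lemma isOrderIdeal_Iic (a : Fin r → ℕ) : IsOrderIdeal (Iic a) :=
  ⟨⟨a, mem_Iic.mpr le_rfl⟩, fun _ hm _ hm' => mem_Iic.mpr (hm'.trans (mem_Iic.mp hm))⟩

lemma maxMons_Iic (a : Fin r → ℕ) : maxMons (Iic a) = {a} := by
  ext m
  simp only [maxMons, mem_filter, mem_Iic, mem_singleton]
  exact ⟨fun ⟨hm, hmax⟩ => (hmax a le_rfl hm).symm,
    by rintro rfl; exact ⟨le_rfl, fun _ h h' => le_antisymm h h'⟩⟩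

lemma eq_Iic_of_maxMons_eq_singleton {X : Finset (Fin r → ℕ)} {a : Fin r → ℕ}
    (hX : IsOrderIdeal X) (h : maxMons X = {a}) : X = Iic a := by
  have ha : a ∈ X := (mem_filter.mp (h ▸ mem_singleton_self a : a ∈ maxMons X)).1
  ext m
  rw [mem_Iic]
  refine ⟨fun hm => ?_, hX.2 a ha m⟩
  obtain ⟨b, hmb, hb⟩ := X.exists_le_maximal hm
  have hbmax : b ∈ maxMons X :=
    mem_filter.mpr ⟨hb.1, fun m' hm' h' => le_antisymm (hb.2 hm' h') h'⟩
  rw [h, mem_singleton] at hbmax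
  exact hbmax ▸ hmb

lemma hVec_Iic (a : Fin r → ℕ) (i : ℕ) :
    hVec (Iic a) i = (boxHilbertPoly ℕ (univ.val.map a)).coeff i := by
  have hgen : boxHilbertPoly ℕ (univ.val.map a) = ∑ m ∈ Iic a, X ^ mdeg m := by
    rw [boxHilbertPoly, Multiset.map_map, prod_map_val]
    simp only [Function.comp_apply]
    rw [prod_univ_sum]
    refine sum_congr ?_ fun m _ => prod_pow_eq_pow_sum _ _ _
    ext m
    simp [Pi.le_def]
  rw [hgen, finsetSum_coeff, hVec, card_filter]
  simp [coeff_X_pow, eq_comm]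

lemma hVec_Iic_one (a : Fin r → ℕ) : hVec (Iic a) 1 = #{j | 0 < a j} := by
  rw [hVec_Iic, coeff_boxHilbertPoly_one, Multiset.filter_map, Multiset.card_map]
  rfl

end Box

lemma Multiset.exists_fin_map_univ_eq {α : Type*} {r : ℕ} (s : Multiset α) (hs : s.card = r) :
    ∃ a : Fin r → α, univ.val.map a = s := by
  rcases s with ⟨l⟩
  simp only [Multiset.quot_mk_to_coe'', Multiset.coe_card] at hs ⊢
  subst hs
  exact ⟨l.get, by rw [Fin.univ_val_map, List.ofFn_get]⟩

section TypeOne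

variable {r e : ℕ}

lemma exists_Iic_of_partition (p : e.Partition) (hp : p.parts.card = r) :
    ∃ X : Finset (Fin r → ℕ), IsOrderIdeal X ∧ IsPure X e ∧ (maxMons X).card = 1 ∧
      hVec X 1 = r ∧ ∀ i : Fin (e + 1), (boxHilbertPoly ℕ p.parts).coeff i = hVec X i := by
  obtain ⟨a, ha⟩ := p.parts.exists_fin_map_univ_eq hp
  have hpos : ∀ j, 0 < a j := fun j => p.parts_pos (ha ▸ Multiset.mem_map_of_mem a (mem_univ j))
  refine ⟨Iic a, isOrderIdeal_Iic a, fun m hm => ?_, by rw [maxMons_Iic, card_singleton], ?_,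
    fun i => by rw [hVec_Iic, ha]⟩
  · rw [maxMons_Iic, mem_singleton] at hm
    rw [hm, ← p.parts_sum, ← ha]
    rfl
  · rw [hVec_Iic_one, filter_true_of_mem fun j _ => hpos j, card_univ, Fintype.card_fin]

lemma exists_partition_of_maxMons_card_eq_one {X : Finset (Fin r → ℕ)} (hX : IsOrderIdeal X)
    (hpure : IsPure X e) (hmax : (maxMons X).card = 1) (hone : hVec X 1 = r) :
    ∃ p : e.Partition, p.parts.card = r ∧
      ∀ i, (boxHilbertPoly ℕ p.parts).coeff i = hVec X i := by
  obtain ⟨a, ha⟩ := card_eq_one.mp hmax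
  obtain rfl := eq_Iic_of_maxMons_eq_singleton hX ha
  have hpos : ∀ j, 0 < a j := by
    rw [hVec_Iic_one] at hone
    simpa using card_filter_eq_iff.mp (hone.trans (card_fin r).symm)
  refine ⟨⟨univ.val.map a, fun {c} hc => ?_, hpure a (by simp [ha])⟩, by simp,
    fun i => (hVec_Iic a i).symm⟩
  obtain ⟨j, -, rfl⟩ := Multiset.mem_map.mp hc
  exact hpos j

lemma Nat.Partition.eq_of_coeff_boxHilbertPoly_eq {p q : e.Partition}
    (hcard : p.parts.card = q.parts.card)
    (h : ∀ i ≤ e, (boxHilbertPoly ℕ p.parts).coeff i = (boxHilbertPoly ℕ q.parts).coeff i) :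
    p = q := by
  have hpq : boxHilbertPoly ℕ p.parts = boxHilbertPoly ℕ q.parts :=
    (ext_iff_natDegree_le ((natDegree_boxHilbertPoly_le _).trans_eq p.parts_sum)
      ((natDegree_boxHilbertPoly_le _).trans_eq q.parts_sum)).mpr h
  have hpqℤ := congrArg (Polynomial.map (Nat.castRingHom ℤ)) hpq
  rw [map_boxHilbertPoly, map_boxHilbertPoly] at hpqℤ
  exact Nat.Partition.ext (eq_of_boxHilbertPoly_eq hcard hpqℤ)

end TypeOne

/-- The number of pure `O`-sequences of codimension `r`, socle degree `e`, and type `1`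
equals `p_r(e)`, the number of partitions of `e` into exactly `r` parts. -/
theorem stmt4 (r e : ℕ) :
    Nat.card {h : Fin (e + 1) → ℕ //
      ∃ X : Finset (Fin r → ℕ), IsOrderIdeal X ∧ IsPure X e ∧
        (maxMons X).card = 1 ∧ hVec X 1 = r ∧ ∀ i : Fin (e + 1), h i = hVec X i} =
    Fintype.card {p : Nat.Partition e // p.parts.card = r} := by
  rw [← Nat.card_eq_fintype_card]
  refine (Nat.card_eq_of_bijective (fun p => ⟨fun i => (boxHilbertPoly ℕ p.1.parts).coeff i,
    exists_Iic_of_partition p.1 p.2⟩) ⟨?_, ?_⟩).symm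
  · rintro ⟨p, hp⟩ ⟨q, hq⟩ hpq
    refine Subtype.ext (Nat.Partition.eq_of_coeff_boxHilbertPoly_eq (hp.trans hq.symm)
      fun i hi => ?_)
    exact congrFun (congrArg Subtype.val hpq) ⟨i, Nat.lt_succ_of_le hi⟩
  · rintro ⟨h, X, hX, hpure, hmax, hone, hh⟩
    obtain ⟨p, hp, hpX⟩ := exists_partition_of_maxMons_card_eq_one hX hpure hmax hone
    exact ⟨⟨p, hp⟩, Subtype.ext (funext fun i => (hpX i).trans (hh i).symm)⟩
end

section
/- Distinct partitions of e into exactly r positive parts yield distinct h-vectors: if (a_1,...,a_r) and (b_1,...,b_r) are weakly decreasing r-tuples of positive integers summing to e, and for every i the number of r-tuples (c_1,...,c_r) with 0 ≤ c_j ≤ a_j and c_1+...+c_r = i equals the number with 0 ≤ c_j ≤ b_j and c_1+...+c_r = i, then (a_1,...,a_r) = (b_1,...,b_r). -/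
/-!
The `h`-vector of `a` is the coefficient sequence of the `h`-polynomial `∏ⱼ (1 + X + ⋯ + X^{aⱼ})`.
The smallest part is read off the `h`-vector: if `aᵣ < bᵣ` are the smallest parts, then in degree
`aᵣ + 1` every admissible exponent tuple for `a` is one for `b`, but `(0, …, 0, aᵣ + 1)` is
admissible only for `b`. Once the smallest parts agree, their common factor cancels from the two
`h`-polynomials in the domain `ℤ[X]`, and induction on `r` finishes the proof.
-/

open Finset Polynomial

def hVector {r : ℕ} (a : Fin r → ℕ) (i : ℕ) : ℕ :=
  #{c ∈ Fintype.piFinset fun j => range (a j + 1) | ∑ j, c j = i}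

noncomputable def hPolynomial {r : ℕ} (a : Fin r → ℕ) : ℤ[X] :=
  ∏ j, ∑ t ∈ range (a j + 1), X ^ t

lemma mem_hVector_filter {r : ℕ} {a : Fin r → ℕ} {i : ℕ} {c : Fin r → ℕ} :
    c ∈ {c ∈ Fintype.piFinset fun j => range (a j + 1) | ∑ j, c j = i} ↔
      c ≤ a ∧ ∑ j, c j = i := by
  simp [Pi.le_def]

lemma coeff_hPolynomial {r : ℕ} (a : Fin r → ℕ) (i : ℕ) :
    (hPolynomial a).coeff i = hVector a i := by
  simp only [hPolynomial, hVector, prod_univ_sum, prod_pow_eq_pow_sum, finsetSum_coeff,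
    coeff_X_pow, sum_boole, eq_comm (a := i)]

lemma hPolynomial_eq_mul_init {r : ℕ} (a : Fin (r + 1) → ℕ) :
    hPolynomial a = hPolynomial (Fin.init a) * ∑ t ∈ range (a (Fin.last r) + 1), X ^ t :=
  Fin.prod_univ_castSucc _

lemma hVector_lt_hVector {r : ℕ} {a b : Fin r → ℕ} {i : ℕ} {j₀ : Fin r} (hj₀ : a j₀ < i)
    (hb : ∀ j, i ≤ b j) : hVector a i < hVector b i := by
  refine card_lt_card ⟨fun c hc => ?_, fun hsub => ?_⟩
  · rw [mem_hVector_filter] at hc ⊢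
    exact ⟨fun j => (hc.2 ▸ single_le_sum (fun _ _ => Nat.zero_le _) (mem_univ j)).trans (hb j),
      hc.2⟩
  · have hsingle : Pi.single j₀ i ≤ b := fun j => by
      by_cases hj : j = j₀
      · subst hj; simpa using hb j
      · simp [Pi.single_eq_of_ne hj]
    have := (mem_hVector_filter.mp (hsub (mem_hVector_filter.mpr ⟨hsingle, by simp⟩))).1 j₀
    exact hj₀.not_ge (by simpa using this)

lemma apply_last_eq_of_hVector_eq {r : ℕ} {a b : Fin (r + 1) → ℕ} (ha : Antitone a)
    (hb : Antitone b) (h : hVector a = hVector b) : a (Fin.last r) = b (Fin.last r) := by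
  have key : ∀ {a b : Fin (r + 1) → ℕ}, Antitone b → a (Fin.last r) < b (Fin.last r) →
      hVector a ≠ hVector b := fun hb hlt h =>
    (hVector_lt_hVector (lt_add_one _) fun j => hlt.trans_le (hb (Fin.le_last j))).ne
      (congrFun h _)
  rcases lt_trichotomy (a (Fin.last r)) (b (Fin.last r)) with hlt | heq | hgt
  · exact absurd h (key hb hlt)
  · exact heq
  · exact absurd h.symm (key ha hgt)

theorem eq_of_hPolynomial_eq {r : ℕ} {a b : Fin r → ℕ} (ha : Antitone a) (hb : Antitone b)
    (h : hPolynomial a = hPolynomial b) : a = b := by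
  induction r with
  | zero => exact Subsingleton.elim a b
  | succ r ih =>
    have hlast : a (Fin.last r) = b (Fin.last r) :=
      apply_last_eq_of_hVector_eq ha hb <| funext fun i => by
        exact_mod_cast (coeff_hPolynomial a i).symm.trans (h ▸ coeff_hPolynomial b i)
    have hinit : Fin.init a = Fin.init b := by
      refine ih (ha.comp_monotone Fin.strictMono_castSucc.monotone)
        (hb.comp_monotone Fin.strictMono_castSucc.monotone)
        (mul_right_cancel₀ (monic_geom_sum_X (Nat.succ_ne_zero (b (Fin.last r)))).ne_zero ?_)
      rwa [← hPolynomial_eq_mul_init, ← hlast, ← hPolynomial_eq_mul_init]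
    rw [← Fin.snoc_init_self a, ← Fin.snoc_init_self b, hinit, hlast]

theorem stmt5_general (r : ℕ) (a b : Fin r → ℕ)
    (ha_dec : Antitone a) (hb_dec : Antitone b)
    (h : ∀ i, ((Fintype.piFinset fun j => Finset.range (a j + 1)).filter
          (fun c => ∑ j, c j = i)).card =
        ((Fintype.piFinset fun j => Finset.range (b j + 1)).filter
          (fun c => ∑ j, c j = i)).card) :
    a = b :=
  eq_of_hPolynomial_eq ha_dec hb_dec <| Polynomial.ext fun i => by
    rw [coeff_hPolynomial, coeff_hPolynomial, hVector, hVector, h]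

/-- Distinct partitions of `e` into exactly `r` positive parts yield distinct `h`-vectors:
if the divisor order ideals of `y_1^{a_1}···y_r^{a_r}` and `y_1^{b_1}···y_r^{b_r}` have
the same number of monomials in every degree, then `(a_1,...,a_r) = (b_1,...,b_r)`. -/
theorem stmt5 (r e : ℕ) (a b : Fin r → ℕ)
    (ha_dec : Antitone a) (hb_dec : Antitone b)
    (ha_pos : ∀ j, 1 ≤ a j) (hb_pos : ∀ j, 1 ≤ b j)
    (ha_sum : ∑ j, a j = e) (hb_sum : ∑ j, b j = e)
    (h : ∀ i, ((Fintype.piFinset fun j => Finset.range (a j + 1)).filter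
          (fun c => ∑ j, c j = i)).card =
        ((Fintype.piFinset fun j => Finset.range (b j + 1)).filter
          (fun c => ∑ j, c j = i)).card) :
    a = b :=
  stmt5_general r a b ha_dec hb_dec h
end

section
/- The sequence (1,8,16,24,36) is a pure O-sequence (being the entrywise sum of the pure O-sequences (1,4,10,20,35) and (0,4,6,4,1) realized in disjoint sets of variables), but its first difference (1,7,8,8,12) is not an O-sequence since 12 > (8_{(3)})^1_1 = 10; hence (1,8,16,24,36) is a nondecreasing pure O-sequence that is not differentiable. -/
open scoped Classical

/-- a finite list `(h_0, h_1, ...)` is an `O`-sequence if `h_0 = 1` and Macaulay's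
growth bound `h_{t+1} ≤ ((h_t)_(t))^1_1` holds for all `t ≥ 1` -/
def IsOSeqList (h : List ℕ) : Prop :=
  h.getD 0 0 = 1 ∧ ∀ t, 1 ≤ t → t + 1 < h.length → h.getD (t + 1) 0 ≤ mb (h.getD t 0) t

/-- first difference of a finite sequence -/
def diffList (l : List ℕ) : List ℕ := l.zipWith (fun x y => x - y) (0 :: l)

/-! `(1,8,16,24,36) + (1,0,0,0,0) = (1,4,10,20,35) + (1,4,6,4,1)`, the `h`-vectors of all
monomials of degree `≤ 4` in four variables and of the squarefree monomials in four other
variables. Both order ideals are pure of socle degree `4`, and so is their union, whose `h`-vector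
is the sum of the two minus the shared monomial `1`. The claims about the first difference are
finite computations. -/

open Finset

section Monomials

variable {r : ℕ}

@[simp]
lemma mdeg_zero : mdeg (0 : Fin r → ℕ) = 0 := by
  simp [mdeg]

lemma mdeg_mono : Monotone (mdeg : (Fin r → ℕ) → ℕ) :=
  fun _ _ h => sum_le_sum fun i _ => h i

lemma le_mdeg (m : Fin r → ℕ) (i : Fin r) : m i ≤ mdeg m :=
  single_le_sum (fun _ _ => Nat.zero_le _) (mem_univ i)

lemma mdeg_add_single (m : Fin r → ℕ) (i : Fin r) : mdeg (m + Pi.single i 1) = mdeg m + 1 := by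
  simp [mdeg, sum_add_distrib]

lemma lt_add_single (m : Fin r → ℕ) (i : Fin r) : m < m + Pi.single i 1 :=
  lt_add_of_pos_right m (Pi.single_pos.2 Nat.one_pos)

lemma IsOrderIdeal.zero_mem {X : Finset (Fin r → ℕ)} (hX : IsOrderIdeal X) : 0 ∈ X :=
  let ⟨m, hm⟩ := hX.1
  hX.2 m hm 0 zero_le

lemma isPure_of_exists_gt {X : Finset (Fin r → ℕ)} {e : ℕ}
    (h : ∀ m ∈ X, mdeg m ≠ e → ∃ m' ∈ X, m < m') : IsPure X e := by
  intro m hm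
  rw [maxMons, mem_filter] at hm
  by_contra hne
  obtain ⟨m', hm', hlt⟩ := h m hm.1 hne
  exact hlt.ne' (hm.2 m' hm' hlt.le)

lemma hVec_eq_getD {X : Finset (Fin r → ℕ)} {h : List ℕ} (hdeg : ∀ m ∈ X, mdeg m < h.length)
    (hcount : (List.range h.length).map (hVec X) = h) (i : ℕ) : hVec X i = h.getD i 0 := by
  rcases lt_or_ge i h.length with hi | hi
  · conv_rhs => rw [← hcount]
    simp [hi]
  · rw [List.getD_eq_default _ _ hi, hVec, card_eq_zero, filter_eq_empty_iff]
    exact fun m hm hmi => (hdeg m hm).not_ge (hmi ▸ hi)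

end Monomials

section Join

variable {α : Type*} {a b : ℕ}

lemma Fin.append_le_append_iff [LE α] {u u' : Fin a → α} {v v' : Fin b → α} :
    Fin.append u v ≤ Fin.append u' v' ↔ u ≤ u' ∧ v ≤ v' := by
  simp [Pi.le_def, Fin.forall_fin_add]

lemma Fin.append_inj {u u' : Fin a → α} {v v' : Fin b → α} :
    Fin.append u v = Fin.append u' v' ↔ u = u' ∧ v = v' := by
  simp [funext_iff, Fin.forall_fin_add]

@[simp]
lemma Fin.append_zero_zero [Zero α] : Fin.append (0 : Fin a → α) (0 : Fin b → α) = 0 := by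
  rw [← Fin.append_castAdd_natAdd (f := 0)]
  rfl

lemma mdeg_append (u : Fin a → ℕ) (v : Fin b → ℕ) : mdeg (Fin.append u v) = mdeg u + mdeg v := by
  simp [mdeg, Fin.sum_univ_add]

/-- Two monomial order ideals placed in disjoint sets of variables. -/
def joinIdeal (X : Finset (Fin a → ℕ)) (Y : Finset (Fin b → ℕ)) :
    Finset (Fin (a + b) → ℕ) :=
  X.image (Fin.append · 0) ∪ Y.image (Fin.append 0 ·)

variable {X : Finset (Fin a → ℕ)} {Y : Finset (Fin b → ℕ)}

lemma append_zero_mem_joinIdeal {u : Fin a → ℕ} (hu : u ∈ X) : Fin.append u 0 ∈ joinIdeal X Y :=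
  mem_union_left _ (mem_image_of_mem _ hu)

lemma zero_append_mem_joinIdeal {v : Fin b → ℕ} (hv : v ∈ Y) : Fin.append 0 v ∈ joinIdeal X Y :=
  mem_union_right _ (mem_image_of_mem _ hv)

lemma IsOrderIdeal.joinIdeal (hX : IsOrderIdeal X) (hY : IsOrderIdeal Y) :
    IsOrderIdeal (joinIdeal X Y) := by
  refine ⟨⟨_, append_zero_mem_joinIdeal hX.zero_mem⟩, fun m hm m' hle => ?_⟩
  rw [← Fin.append_castAdd_natAdd (f := m')] at hle ⊢
  rcases mem_union.1 hm with hm | hm <;> obtain ⟨u, hu, rfl⟩ := mem_image.1 hm <;>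
    obtain ⟨hle₁, hle₂⟩ := Fin.append_le_append_iff.1 hle
  · rw [nonpos_iff_eq_zero.1 hle₂]
    exact append_zero_mem_joinIdeal (hX.2 u hu _ hle₁)
  · rw [nonpos_iff_eq_zero.1 hle₁]
    exact zero_append_mem_joinIdeal (hY.2 u hu _ hle₂)

lemma IsPure.joinIdeal {e : ℕ} (hX : IsPure X e) (hY : IsPure Y e) :
    IsPure (joinIdeal X Y) e := by
  intro m hm
  simp only [maxMons, mem_filter] at hm
  obtain ⟨hm, hmax⟩ := hm
  rcases mem_union.1 hm with hm | hm <;> obtain ⟨u, hu, rfl⟩ := mem_image.1 hm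
  · have hu_max : u ∈ maxMons X := mem_filter.2 ⟨hu, fun u' hu' hle =>
      (Fin.append_inj.1 (hmax _ (append_zero_mem_joinIdeal hu')
        (Fin.append_le_append_iff.2 ⟨hle, le_rfl⟩))).1⟩
    simpa [mdeg_append] using hX u hu_max
  · have hu_max : u ∈ maxMons Y := mem_filter.2 ⟨hu, fun u' hu' hle =>
      (Fin.append_inj.1 (hmax _ (zero_append_mem_joinIdeal hu')
        (Fin.append_le_append_iff.2 ⟨le_rfl, hle⟩))).2⟩
    simpa [mdeg_append] using hY u hu_max

lemma hVec_joinIdeal (hX : 0 ∈ X) (hY : 0 ∈ Y) (i : ℕ) :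
    hVec (joinIdeal X Y) i + (if i = 0 then 1 else 0) = hVec X i + hVec Y i := by
  set A := (X.filter (mdeg · = i)).image (Fin.append · (0 : Fin b → ℕ))
  set B := (Y.filter (mdeg · = i)).image (Fin.append (0 : Fin a → ℕ) ·)
  have hslice : (joinIdeal X Y).filter (mdeg · = i) = A ∪ B := by
    simp [A, B, joinIdeal, filter_union, filter_image, mdeg_append]
  have hA : A.card = hVec X i := card_image_of_injective _ fun u u' h => (Fin.append_inj.1 h).1
  have hB : B.card = hVec Y i := card_image_of_injective _ fun v v' h => (Fin.append_inj.1 h).2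
  have hAB : A ∩ B = if i = 0 then {0} else ∅ := by
    ext x
    simp only [A, B, mem_inter, mem_image, mem_filter]
    constructor
    · rintro ⟨⟨u, ⟨-, rfl⟩, rfl⟩, ⟨v, ⟨-, hv⟩, huv⟩⟩
      obtain ⟨rfl, rfl⟩ := Fin.append_inj.1 huv
      simp [← hv]
    · intro hx
      split_ifs at hx with hi
      · subst hi
        rw [mem_singleton.1 hx]
        exact ⟨⟨0, ⟨hX, mdeg_zero⟩, Fin.append_zero_zero⟩, ⟨0, ⟨hY, mdeg_zero⟩, Fin.append_zero_zero⟩⟩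
      · simp at hx
  rw [hVec, hslice, ← hA, ← hB, ← card_union_add_card_inter, hAB]
  split_ifs <;> rfl

end Join

lemma IsPureOSeqList.add {h₁ h₂ h : List ℕ} (hh₁ : IsPureOSeqList h₁) (hh₂ : IsPureOSeqList h₂)
    (hlen₁ : h₁.length = h.length) (hlen₂ : h₂.length = h.length)
    (hsum : ∀ i, h.getD i 0 + (if i = 0 then 1 else 0) = h₁.getD i 0 + h₂.getD i 0) :
    IsPureOSeqList h := by
  obtain ⟨a, X, hX, hXpure, hXvec⟩ := hh₁
  obtain ⟨b, Y, hY, hYpure, hYvec⟩ := hh₂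
  rw [hlen₁] at hXpure
  rw [hlen₂] at hYpure
  refine ⟨a + b, joinIdeal X Y, hX.joinIdeal hY, hXpure.joinIdeal hYpure, fun i => ?_⟩
  have := hVec_joinIdeal (Y := Y) hX.zero_mem hY.zero_mem i
  rw [hXvec, hYvec, ← hsum] at this
  omega

section Examples

variable {r : ℕ}

def monomialsDegLE (r e : ℕ) : Finset (Fin r → ℕ) :=
  (Fintype.piFinset fun _ => range (e + 1)).filter fun m => mdeg m ≤ e

def squarefreeMonomials (r : ℕ) : Finset (Fin r → ℕ) :=
  Fintype.piFinset fun _ => range 2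

lemma mem_monomialsDegLE {e : ℕ} {m : Fin r → ℕ} : m ∈ monomialsDegLE r e ↔ mdeg m ≤ e := by
  simp only [monomialsDegLE, mem_filter, Fintype.mem_piFinset, mem_range, and_iff_right_iff_imp]
  exact fun hm i => Nat.lt_succ_of_le ((le_mdeg m i).trans hm)

lemma mem_squarefreeMonomials {m : Fin r → ℕ} : m ∈ squarefreeMonomials r ↔ ∀ i, m i ≤ 1 := by
  simp [squarefreeMonomials]

lemma isOrderIdeal_monomialsDegLE (e : ℕ) : IsOrderIdeal (monomialsDegLE r e) := by
  refine ⟨⟨0, mem_monomialsDegLE.2 (by simp)⟩, fun m hm m' hle => ?_⟩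
  rw [mem_monomialsDegLE] at hm ⊢
  exact (mdeg_mono hle).trans hm

lemma isPure_monomialsDegLE (hr : 0 < r) (e : ℕ) : IsPure (monomialsDegLE r e) e := by
  refine isPure_of_exists_gt fun m hm hne => ⟨_, ?_, lt_add_single m ⟨0, hr⟩⟩
  rw [mem_monomialsDegLE] at hm ⊢
  rw [mdeg_add_single]
  omega

lemma isOrderIdeal_squarefreeMonomials : IsOrderIdeal (squarefreeMonomials r) := by
  refine ⟨⟨0, mem_squarefreeMonomials.2 fun _ => zero_le_one⟩, fun m hm m' hle => ?_⟩
  rw [mem_squarefreeMonomials] at hm ⊢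
  exact fun i => (hle i).trans (hm i)

lemma mdeg_le_of_mem_squarefreeMonomials {m : Fin r → ℕ} (hm : m ∈ squarefreeMonomials r) :
    mdeg m ≤ r := by
  simpa [mdeg] using sum_le_sum fun i (_ : i ∈ univ) => mem_squarefreeMonomials.1 hm i

lemma isPure_squarefreeMonomials : IsPure (squarefreeMonomials r) r := by
  refine isPure_of_exists_gt fun m hm hne => ?_
  rw [mem_squarefreeMonomials] at hm
  obtain ⟨i, hi⟩ : ∃ i, m i = 0 := by
    by_contra! h
    exact hne (by simp [mdeg, fun i => le_antisymm (hm i) (Nat.one_le_iff_ne_zero.2 (h i))])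
  refine ⟨_, mem_squarefreeMonomials.2 fun j => ?_, lt_add_single m i⟩
  rcases eq_or_ne j i with rfl | hj <;> simp [*]

lemma isPureOSeqList_monomialsDegLE_four :
    IsPureOSeqList [1, 4, 10, 20, 35] :=
  ⟨4, monomialsDegLE 4 4, isOrderIdeal_monomialsDegLE 4, isPure_monomialsDegLE (by norm_num) 4,
    hVec_eq_getD (fun _ hm => Nat.lt_succ_of_le (mem_monomialsDegLE.1 hm)) (by decide)⟩

lemma isPureOSeqList_squarefreeMonomials_four :
    IsPureOSeqList [1, 4, 6, 4, 1] :=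
  ⟨4, squarefreeMonomials 4, isOrderIdeal_squarefreeMonomials, isPure_squarefreeMonomials,
    hVec_eq_getD (fun _ hm => Nat.lt_succ_of_le (mdeg_le_of_mem_squarefreeMonomials hm))
      (by decide)⟩

end Examples

/-- `(1,8,16,24,36)` is a nondecreasing pure `O`-sequence whose first difference
`(1,7,8,8,12)` is not an `O`-sequence (since `12 > (8_(3))^1_1 = 10`);
hence it is a nondecreasing pure `O`-sequence that is not differentiable. -/
theorem stmt8 :
    IsPureOSeqList [1, 8, 16, 24, 36] ∧
    List.Chain' (· ≤ ·) [1, 8, 16, 24, 36] ∧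
    diffList [1, 8, 16, 24, 36] = [1, 7, 8, 8, 12] ∧
    mb 8 3 = 10 ∧
    ¬ IsOSeqList [1, 7, 8, 8, 12] := by
  -- `8 = C(4,3) + C(3,2) + C(1,1)`, so `(8_(3))^1_1 = C(5,4) + C(4,3) + C(2,2) = 10`
  have hmb : mb 8 3 = 10 := by decide
  refine ⟨?_, ?_, by decide, hmb, ?_⟩
  · refine isPureOSeqList_monomialsDegLE_four.add isPureOSeqList_squarefreeMonomials_four
      rfl rfl fun i => ?_
    rcases i with _ | _ | _ | _ | _ | i <;> rfl
  · show List.IsChain _ _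
    simp
  · rintro ⟨-, hgrowth⟩
    have h := hgrowth 3 (by norm_num) (by norm_num)
    simp only [List.getD_cons_succ, List.getD_cons_zero, hmb] at h
    omega
end
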